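/- arXiv:1810.11969 — 4 statements merged into one kernel-verified Lean document; each statement's English description precedes it below -/
import Mathlib

section
/- The binary Krawtchouk polynomials satisfy the Christoffel–Darboux formula: for all natural numbers t < n and all real (or rational) a, x, P_{t+1}(x) P_t(a) - P_t(x) P_{t+1}(a) = (2(a - x)/(t+1)) * C(n, t) * ∑_{i=0}^{t} P_i(x) P_i(a) / C(n, i). -/
/-- Generalized binomial coefficient `C(x, j) = x(x-1)⋯(x-j+1)/j!` with a real
argument. -/
noncomputable def rchoose (x : ℝ) (j : ℕ) : ℝ :=
  (∏ t ∈ Finset.range j, (x - t)) / (Nat.factorial j : ℝ)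

/-- Binary Krawtchouk polynomial with parameter `n`, as a function of a real
variable `x`. -/
noncomputable def krawR (n k : ℕ) (x : ℝ) : ℝ :=
  ∑ j ∈ Finset.range (k + 1),
    (-1 : ℝ) ^ j * rchoose x j * rchoose ((n : ℝ) - x) (k - j)

/-!
The generating function `∑ₖ Pₖ(x) zᵏ = (1 - z)^x (1 + z)^(n - x)`, read as a product of two
formal binomial series, satisfies `(1 - z²) G' = ((n - 2x) - n z) G`. Comparing coefficients gives
the three-term recurrence `(k + 2) P_{k+2} = (n - 2x) P_{k+1} - (n - k) P_k`. Multiplying the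
recurrences at `x` and at `a` crosswise, the Casoratian
`W_t = P_{t+1}(x) P_t(a) - P_t(x) P_{t+1}(a)` satisfies
`(t + 2) W_{t+1} = 2(a - x) P_{t+1}(x) P_{t+1}(a) + (n - t) W_t`, and since
`C(n, t+1) (t + 1) = C(n, t) (n - t)` the quantity `(t + 1) W_t / C(n, t)` telescopes to the sum.
-/

open PowerSeries

section FormalODE

variable {R : Type*} [CommRing R]

lemma coeff_X_mul_derivative (F : R⟦X⟧) (k : ℕ) :
    coeff k (X * d⁄dX R F) = k * coeff k F := by
  cases k with
  | zero => simp
  | succ k => rw [coeff_succ_X_mul, coeff_derivative]; push_cast; ring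

lemma coeff_succ_one_sub_X_sq_mul_derivative (F : R⟦X⟧) (k : ℕ) :
    coeff (k + 1) ((1 - X ^ 2) * d⁄dX R F)
      = (k + 2) * coeff (k + 2) F - k * coeff k F := by
  rw [sub_mul, one_mul, map_sub, pow_two, mul_assoc, coeff_succ_X_mul,
    coeff_X_mul_derivative, coeff_derivative]
  push_cast; ring

lemma one_add_C_mul_X_mul_derivative_mk {ε r : R} {f : ℕ → R}
    (hf : ∀ m : ℕ, ((m : R) + 1) * f (m + 1) = ε * (r - m) * f m) :
    (1 + C ε * X) * d⁄dX R (mk f) = C (ε * r) * mk f := by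
  ext k
  rw [add_mul, one_mul, map_add, mul_assoc, coeff_C_mul, coeff_X_mul_derivative,
    coeff_derivative, coeff_C_mul, coeff_mk, coeff_mk]
  linear_combination hf k

end FormalODE

lemma succ_mul_rchoose_succ (r : ℝ) (m : ℕ) :
    (m + 1) * rchoose r (m + 1) = (r - m) * rchoose r m := by
  rw [rchoose, rchoose, Finset.prod_range_succ, Nat.factorial_succ]
  push_cast
  field_simp

noncomputable def krawSeries (n : ℕ) (x : ℝ) : ℝ⟦X⟧ :=
  mk (fun j => (-1) ^ j * rchoose x j) * mk (rchoose (n - x))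

lemma coeff_krawSeries (n k : ℕ) (x : ℝ) : coeff k (krawSeries n x) = krawR n k x := by
  rw [krawSeries, coeff_mul, Finset.Nat.sum_antidiagonal_eq_sum_range_succ_mk, krawR]
  simp only [coeff_mk, mul_assoc]

lemma krawSeries_ode (n : ℕ) (x : ℝ) :
    (1 - X ^ 2) * d⁄dX ℝ (krawSeries n x)
      = (C (n - 2 * x) - C (n : ℝ) * X) * krawSeries n x := by
  have hA : (1 + C (-1) * X) * d⁄dX ℝ (mk fun j => (-1) ^ j * rchoose x j)
      = C (-1 * x) * mk fun j => (-1) ^ j * rchoose x j :=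
    one_add_C_mul_X_mul_derivative_mk fun m => by
      linear_combination (-1) ^ (m + 1) * succ_mul_rchoose_succ x m
  have hB : (1 + C 1 * X) * d⁄dX ℝ (mk (rchoose (n - x)))
      = C (1 * (n - x)) * mk (rchoose (n - x)) :=
    one_add_C_mul_X_mul_derivative_mk fun m => by
      linear_combination succ_mul_rchoose_succ (n - x) m
  rw [krawSeries, Derivation.leibniz, smul_eq_mul, smul_eq_mul]
  simp only [map_neg, map_one, map_mul, map_sub, map_ofNat] at hA hB ⊢
  linear_combination (1 - X) * mk (fun j => (-1) ^ j * rchoose x j) * hB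
    + (1 + X) * mk (rchoose (n - x)) * hA

lemma krawR_succ_succ (n k : ℕ) (x : ℝ) :
    (k + 2) * krawR n (k + 2) x = (n - 2 * x) * krawR n (k + 1) x - (n - k) * krawR n k x := by
  have h := congrArg (coeff (k + 1)) (krawSeries_ode n x)
  rw [coeff_succ_one_sub_X_sq_mul_derivative, sub_mul, map_sub, coeff_C_mul, mul_assoc,
    coeff_C_mul, coeff_succ_X_mul] at h
  simp only [coeff_krawSeries] at h
  linear_combination h

lemma krawR_zero (n : ℕ) (x : ℝ) : krawR n 0 x = 1 := by
  simp [krawR, rchoose]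

lemma krawR_one (n : ℕ) (x : ℝ) : krawR n 1 x = n - 2 * x := by
  simp [krawR, rchoose, Finset.sum_range_succ]
  ring

noncomputable def krawCasoratian (n t : ℕ) (x a : ℝ) : ℝ :=
  krawR n (t + 1) x * krawR n t a - krawR n t x * krawR n (t + 1) a

lemma krawCasoratian_zero (n : ℕ) (x a : ℝ) : krawCasoratian n 0 x a = 2 * (a - x) := by
  rw [krawCasoratian, krawR_zero, krawR_zero, krawR_one, krawR_one]
  ring

lemma succ_mul_krawCasoratian_succ (n t : ℕ) (x a : ℝ) :
    (t + 2) * krawCasoratian n (t + 1) x a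
      = 2 * (a - x) * (krawR n (t + 1) x * krawR n (t + 1) a)
        + (n - t) * krawCasoratian n t x a := by
  rw [krawCasoratian, krawCasoratian]
  linear_combination
    krawR n (t + 1) a * krawR_succ_succ n t x - krawR n (t + 1) x * krawR_succ_succ n t a

lemma succ_mul_krawCasoratian_eq_sum {n t : ℕ} (ht : t ≤ n) (x a : ℝ) :
    (t + 1) * krawCasoratian n t x a
      = 2 * (a - x) * Nat.choose n t * ∑ i ∈ Finset.range (t + 1),
          krawR n i x * krawR n i a / Nat.choose n i := by
  induction t with
  | zero => simp [krawCasoratian_zero, krawR_zero]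
  | succ t ih =>
    have hchoose : (Nat.choose n (t + 1) : ℝ) * (t + 1) = Nat.choose n t * (n - t) := by
      rw [← Nat.cast_sub (by omega)]
      exact_mod_cast Nat.choose_succ_right_eq n t
    have hcancel : (Nat.choose n (t + 1) : ℝ) * (krawR n (t + 1) x * krawR n (t + 1) a
        / Nat.choose n (t + 1)) = krawR n (t + 1) x * krawR n (t + 1) a :=
      mul_div_cancel₀ _ (Nat.cast_ne_zero.mpr (Nat.choose_pos ht).ne')
    rw [Finset.sum_range_succ]
    apply mul_left_cancel₀ (by positivity : (t : ℝ) + 1 ≠ 0)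
    push_cast
    linear_combination (↑t + 1) * succ_mul_krawCasoratian_succ n t x a + (n - t) * ih (by omega)
      - 2 * (a - x) * (∑ i ∈ Finset.range (t + 1), krawR n i x * krawR n i a / Nat.choose n i)
        * hchoose
      - 2 * (a - x) * (t + 1) * hcancel

/-- Christoffel–Darboux formula for the binary Krawtchouk polynomials. -/
theorem kraw_christoffel_darboux (n t : ℕ) (ht : t < n) (a x : ℝ) :
    krawR n (t + 1) x * krawR n t a - krawR n t x * krawR n (t + 1) a
      = (2 * (a - x) / ((t : ℝ) + 1)) * (Nat.choose n t : ℝ) *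
          ∑ i ∈ Finset.range (t + 1),
            krawR n i x * krawR n i a / (Nat.choose n i : ℝ) := by
  rw [div_mul_eq_mul_div, div_mul_eq_mul_div, eq_div_iff (by positivity), mul_comm]
  exact succ_mul_krawCasoratian_eq_sum ht.le x a
end

section
/- For binary Krawtchouk polynomials with parameter n, the identity ∑_{i=0}^{n} C(n - i, n - j) * P_i(x) = 2^j * C(n - x, j) holds for all natural numbers j ≤ n and all integer arguments x with 0 ≤ x ≤ n. -/
/-!
`P_k(x)` is the coefficient of `z^k` in `(1 - z)^x (1 + z)^(n - x)`. Homogenizing in degree `n`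
gives `∑ᵢ P_i(x) aⁱ bⁿ⁻ⁱ = (b - a)^x (b + a)^(n - x)`, so `a = 1`, `b = 1 + t` yields
`∑ᵢ P_i(x) (1 + t)ⁿ⁻ⁱ = t^x (2 + t)^(n - x)`; comparing the coefficients of `t^(n - j)` on both
sides is the identity.
-/

/-- Binary Krawtchouk polynomial (q = 2) with parameter `n`, evaluated at a
natural number argument `x`. -/
def kraw (n k x : ℕ) : ℤ :=
  ∑ j ∈ Finset.range (k + 1),
    (-1 : ℤ) ^ j * (Nat.choose x j : ℤ) * (Nat.choose (n - x) (k - j) : ℤ)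

open Finset Polynomial

namespace Polynomial

lemma coeff_one_sub_X_pow {R : Type*} [CommRing R] (m k : ℕ) :
    ((1 - X : R[X]) ^ m).coeff k = (-1) ^ k * m.choose k := by
  rw [sub_eq_neg_add, add_pow, finsetSum_coeff]
  simp only [neg_pow (X : R[X]), one_pow, mul_one, ← C_eq_natCast, ← C_1, ← C_neg, ← C_pow,
    coeff_mul_C, coeff_C_mul, coeff_X_pow]
  simp +contextual [Nat.choose_eq_zero_of_lt]

lemma aeval_homogenize {R A : Type*} [CommSemiring R] [CommSemiring A] [Algebra R A]
    (p : R[X]) (n : ℕ) (a b : A) :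
    MvPolynomial.aeval ![a, b] (homogenize p n)
      = ∑ i ∈ range (n + 1), algebraMap R A (p.coeff i) * a ^ i * b ^ (n - i) := by
  rw [homogenize, map_sum, Nat.sum_antidiagonal_eq_sum_range_succ_mk]
  refine sum_congr rfl fun i _ => ?_
  simp [MvPolynomial.aeval_monomial, Finsupp.prod_fintype, mul_assoc]

lemma homogenize_one_sub_X_pow_mul_one_add_X_pow {R : Type*} [CommRing R] (x y : ℕ) :
    homogenize ((1 - X : R[X]) ^ x * (1 + X) ^ y) (x + y)
      = (MvPolynomial.X 1 - MvPolynomial.X 0) ^ x * (MvPolynomial.X 1 + MvPolynomial.X 0) ^ y := by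
  apply homogenize_eq_of_isHomogeneous
  · have hsub : (MvPolynomial.X 1 - MvPolynomial.X 0 : MvPolynomial (Fin 2) R).IsHomogeneous 1 :=
      (MvPolynomial.isHomogeneous_X _ _).sub (MvPolynomial.isHomogeneous_X _ _)
    have hadd : (MvPolynomial.X 1 + MvPolynomial.X 0 : MvPolynomial (Fin 2) R).IsHomogeneous 1 :=
      (MvPolynomial.isHomogeneous_X _ _).add (MvPolynomial.isHomogeneous_X _ _)
    simpa using (hsub.pow x).mul (hadd.pow y)
  · simp

end Polynomial

lemma kraw_eq_coeff (n k x : ℕ) :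
    kraw n k x = ((1 - X : ℤ[X]) ^ x * (1 + X) ^ (n - x)).coeff k := by
  rw [coeff_mul, Nat.sum_antidiagonal_eq_sum_range_succ
    (fun i j => ((1 - X : ℤ[X]) ^ x).coeff i * ((1 + X : ℤ[X]) ^ (n - x)).coeff j), kraw]
  simp only [coeff_one_sub_X_pow, coeff_one_add_X_pow]

theorem sum_kraw_mul_pow_mul_pow {A : Type*} [CommRing A] {n x : ℕ} (hx : x ≤ n) (a b : A) :
    ∑ i ∈ range (n + 1), (kraw n i x : A) * a ^ i * b ^ (n - i)
      = (b - a) ^ x * (b + a) ^ (n - x) := by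
  have hhom := homogenize_one_sub_X_pow_mul_one_add_X_pow (R := ℤ) x (n - x)
  rw [Nat.add_sub_cancel' hx] at hhom
  simp_rw [kraw_eq_coeff, ← eq_intCast (algebraMap ℤ A)]
  rw [← aeval_homogenize, hhom]
  simp

/-- `∑_{i=0}^n C(n-i, n-j) P_i(x) = 2^j C(n-x, j)` for `j ≤ n` and `0 ≤ x ≤ n`. -/
theorem kraw_binomial_sum (n j x : ℕ) (hj : j ≤ n) (hx : x ≤ n) :
    ∑ i ∈ Finset.range (n + 1), (Nat.choose (n - i) (n - j) : ℤ) * kraw n i x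
      = 2 ^ j * (Nat.choose (n - x) j : ℤ) := by
  have hgen := congrArg (coeff · (n - j)) (sum_kraw_mul_pow_mul_pow hx (1 : ℤ[X]) (X + 1))
  rw [show (X + 1 + 1 : ℤ[X]) = X + C 2 by rw [map_ofNat]; ring] at hgen
  simp only [one_pow, mul_one, add_sub_cancel_right, finsetSum_coeff, ← C_eq_intCast,
    coeff_C_mul, coeff_X_add_one_pow, Int.cast_id, coeff_X_pow_mul', coeff_X_add_C_pow] at hgen
  simp_rw [mul_comm (Nat.cast (Nat.choose _ _) : ℤ)]
  rw [hgen]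
  split_ifs with hxj
  · rw [show n - x - (n - j - x) = j by omega, show n - j - x = n - x - j by omega,
      Nat.choose_symm (by omega)]
  · rw [Nat.choose_eq_zero_of_lt (by omega), Nat.cast_zero, mul_zero]
end

section
/- Any product of binary Krawtchouk polynomials expands as P_i(x) * P_j(x) = ∑_{k=0}^{n} C(n - k, (i + j - k)/2) * C(k, (i - j + k)/2) * P_k(x), where a binomial coefficient with a fractional (non-integer) or negative lower index is interpreted as zero; the identity holds for all integer arguments x with 0 ≤ x ≤ n and all 0 ≤ i, j ≤ n. -/
/-- Binomial coefficient `C(m, b/2)` where the lower index is the (possibly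
fractional or negative) half of an integer `b`: it is `0` unless `b` is a
nonnegative even integer. -/
def halfChoose (m : ℕ) (b : ℤ) : ℤ :=
  if 0 ≤ b ∧ 2 ∣ b then (Nat.choose m (b / 2).toNat : ℤ) else 0

/-!
Everything is read off from generating functions. With `F(t) = (1 - t)^x (1 + t)^(n - x)` one has
`F(t) = ∑ₖ Pₖ(x) tᵏ`, and since `deg F ≤ n` its homogenization gives
`(a - b)^x (a + b)^(n - x) = ∑ₖ Pₖ(x) bᵏ a^(n - k)` in any commutative ring. Now
`(1 - y)(1 - z) = (1 + yz) - (y + z)` and `(1 + y)(1 + z) = (1 + yz) + (y + z)`, so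
`F(y) F(z) = ∑ₖ Pₖ(x) (y + z)ᵏ (1 + yz)^(n - k)`, and the coefficient of `yⁱ zʲ` in
`(y + z)ᵏ (1 + yz)^(n - k)` is the product of the two half-binomials.
-/

open Polynomial Finset

theorem Polynomial.coeff_one_sub_X_pow_s6 {R : Type*} [CommRing R] (m k : ℕ) :
    ((1 - X : R[X]) ^ m).coeff k = (-1) ^ k * (m.choose k : R) := by
  have : (1 - X : R[X]) ^ m = ((1 + X) ^ m).comp (C (-1) * X) := by
    simp [sub_eq_add_neg]
  rw [this, comp_C_mul_X_coeff, coeff_one_add_X_pow, mul_comm]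

noncomputable def krawGenFun (n x : ℕ) : ℤ[X] := (1 - X) ^ x * (1 + X) ^ (n - x)

theorem coeff_krawGenFun (n x k : ℕ) : (krawGenFun n x).coeff k = kraw n k x := by
  rw [krawGenFun, coeff_mul, Nat.sum_antidiagonal_eq_sum_range_succ_mk, kraw]
  simp only [coeff_one_sub_X_pow_s6, coeff_one_add_X_pow]

theorem homogenize_krawGenFun {n x : ℕ} (hx : x ≤ n) :
    (krawGenFun n x).homogenize n =
      (MvPolynomial.X 1 - MvPolynomial.X 0) ^ x *
        (MvPolynomial.X 1 + MvPolynomial.X 0) ^ (n - x) := by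
  apply homogenize_eq_of_isHomogeneous
  · have hX0 := MvPolynomial.isHomogeneous_X ℤ (0 : Fin 2)
    have hX1 := MvPolynomial.isHomogeneous_X ℤ (1 : Fin 2)
    have h1 := (hX1.sub hX0).pow x
    have h2 := (hX1.add hX0).pow (n - x)
    simpa only [one_mul, Nat.add_sub_cancel' hx] using h1.mul h2
  · simp [krawGenFun, add_comm]

theorem Polynomial.aeval_homogenize_s6 {R S : Type*} [CommSemiring R] [CommSemiring S] [Algebra R S]
    (p : R[X]) (n : ℕ) (f : Fin 2 → S) :
    MvPolynomial.aeval f (p.homogenize n) =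
      ∑ k ∈ range (n + 1), algebraMap R S (p.coeff k) * (f 0 ^ k * f 1 ^ (n - k)) := by
  rw [homogenize, map_sum, Nat.sum_antidiagonal_eq_sum_range_succ_mk]
  simp [MvPolynomial.aeval_monomial, Finsupp.prod_fintype]

theorem sub_pow_mul_add_pow_eq_sum_kraw {S : Type*} [CommRing S] (A B : S) {n x : ℕ}
    (hx : x ≤ n) :
    (A - B) ^ x * (A + B) ^ (n - x) =
      ∑ k ∈ range (n + 1), (kraw n k x : S) * (B ^ k * A ^ (n - k)) := by
  have h := congrArg (MvPolynomial.aeval ![B, A]) (homogenize_krawGenFun hx)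
  rw [aeval_homogenize_s6] at h
  simpa [coeff_krawGenFun] using h.symm

theorem Polynomial.coeff_coeff_map_C_mul_C {R : Type*} [Semiring R] (p q : R[X]) (i j : ℕ) :
    ((p.map C * C q).coeff i).coeff j = p.coeff i * q.coeff j := by
  rw [coeff_mul_C, coeff_map, coeff_C_mul]

theorem halfChoose_eq_sum (m : ℕ) (c : ℤ) :
    halfChoose m c = ∑ b ∈ range (m + 1), if c = 2 * b then (m.choose b : ℤ) else 0 := by
  unfold halfChoose
  split_ifs with hc
  · have hb : ∀ b : ℕ, c = 2 * b ↔ (c / 2).toNat = b := fun b => by omega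
    simp only [hb, sum_ite_eq, mem_range]
    split_ifs with hm
    · rfl
    · rw [Nat.choose_eq_zero_of_lt (by omega), Nat.cast_zero]
  · exact (sum_eq_zero fun b _ => if_neg (by omega)).symm

-- In `ℤ[X][X]` the outer variable `X` is `y` and `C X` is `z`, so `(p.coeff i).coeff j` is the
-- coefficient of `yⁱ zʲ`.
theorem coeff_coeff_X_add_C_X_pow_mul_one_add_X_mul_C_X_pow (k m i j : ℕ) :
    (((X + C X) ^ k * (1 + X * C X) ^ m : ℤ[X][X]).coeff i).coeff j =
      halfChoose m ((i : ℤ) + j - k) * halfChoose k ((i : ℤ) - j + k) := by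
  have hterm : ∀ a ∈ range (k + 1), ∀ b ∈ range (m + 1),
      X ^ a * C X ^ (k - a) * (k.choose a : ℤ[X][X]) *
          ((X * C X) ^ b * 1 ^ (m - b) * (m.choose b : ℤ[X][X]))
        = monomial (a + b) (monomial (k - a + b) ((k.choose a : ℤ) * m.choose b)) := by
    intro a _ b _
    simp only [← C_mul_X_pow_eq_monomial, map_mul, map_pow, map_natCast]
    ring
  rw [add_pow, add_comm 1, add_pow, sum_mul_sum,
    sum_congr rfl fun a ha => sum_congr rfl (hterm a ha), mul_comm (halfChoose m _),
    halfChoose_eq_sum, halfChoose_eq_sum, sum_mul_sum]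
  simp only [finsetSum_coeff, coeff_monomial, apply_ite (coeff · j), coeff_zero]
  refine sum_congr rfl fun a ha => sum_congr rfl fun b _ => ?_
  rw [mem_range] at ha
  split_ifs <;> first | rfl | omega

theorem map_C_mul_C_krawGenFun (n x : ℕ) :
    (krawGenFun n x).map C * C (krawGenFun n x) =
      ((1 + X * C X) - (X + C X)) ^ x * ((1 + X * C X) + (X + C X)) ^ (n - x) := by
  have hsub : (1 + X * C X : ℤ[X][X]) - (X + C X) = (1 - X) * C (1 - X) := by
    rw [map_sub, map_one]; ring
  have hadd : (1 + X * C X : ℤ[X][X]) + (X + C X) = (1 + X) * C (1 + X) := by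
    rw [map_add, map_one]; ring
  rw [hsub, hadd, mul_pow, mul_pow, krawGenFun, ← map_pow, ← map_pow]
  simp only [Polynomial.map_mul, Polynomial.map_pow, Polynomial.map_sub, Polynomial.map_add,
    Polynomial.map_one, map_X, map_mul]
  ring

theorem kraw_product_expansion_general (n i j x : ℕ) (hx : x ≤ n) :
    kraw n i x * kraw n j x
      = ∑ k ∈ Finset.range (n + 1),
          halfChoose (n - k) ((i : ℤ) + j - k) * halfChoose k ((i : ℤ) - j + k) *
            kraw n k x := by
  calc kraw n i x * kraw n j x
      = (((krawGenFun n x).map C * C (krawGenFun n x)).coeff i).coeff j := by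
        rw [coeff_coeff_map_C_mul_C, coeff_krawGenFun, coeff_krawGenFun]
    _ = _ := by
        rw [map_C_mul_C_krawGenFun, sub_pow_mul_add_pow_eq_sum_kraw _ _ hx]
        simp only [finsetSum_coeff, coeff_intCast_mul, Int.cast_id,
          coeff_coeff_X_add_C_X_pow_mul_one_add_X_mul_C_X_pow]
        exact sum_congr rfl fun k _ => by ring

/-- Product expansion of binary Krawtchouk polynomials:
`P_i(x) P_j(x) = ∑_{k=0}^n C(n-k, (i+j-k)/2) C(k, (i-j+k)/2) P_k(x)`,
where binomial coefficients with fractional or negative lower index are zero. -/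
theorem kraw_product_expansion (n i j x : ℕ) (hi : i ≤ n) (hj : j ≤ n)
    (hx : x ≤ n) :
    kraw n i x * kraw n j x
      = ∑ k ∈ Finset.range (n + 1),
          halfChoose (n - k) ((i : ℤ) + j - k) * halfChoose k ((i : ℤ) - j + k) *
            kraw n k x :=
  kraw_product_expansion_general n i j x hx
end

section
/- For Krawtchouk polynomials with parameter n and any natural numbers θ ≤ n/2 and y ≤ n, setting α_i = (P_θ(i))^2 for 0 ≤ i ≤ n, one has ∑_{i=0}^{n} α_i P_i(y) = 2^n * C(n - y, θ - y/2) * C(y, y/2), where binomial coefficients with fractional or negative lower index are zero (so the sum vanishes for odd y). -/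
open Finset

namespace Krawtchouk

variable {α : Type*} [DecidableEq α]

def walsh (A x : Finset α) : ℤ := (-1) ^ #(A ∩ x)

theorem walsh_comm (A x : Finset α) : walsh A x = walsh x A := by
  rw [walsh, walsh, inter_comm]

theorem walsh_eq_prod (A x : Finset α) : walsh A x = ∏ i ∈ x, if i ∈ A then -1 else 1 := by
  rw [walsh, prod_ite_mem, prod_const, inter_comm]

theorem walsh_symmDiff (A B x : Finset α) : walsh (symmDiff A B) x = walsh A x * walsh B x := by
  simp only [walsh_eq_prod, ← prod_mul_distrib]
  refine prod_congr rfl fun i _ => ?_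
  by_cases hA : i ∈ A <;> by_cases hB : i ∈ B <;> simp [mem_symmDiff, hA, hB]

theorem sum_walsh [Fintype α] (A : Finset α) :
    ∑ x : Finset α, walsh A x = if A = ∅ then 2 ^ Fintype.card α else 0 := by
  simp only [walsh_eq_prod, ← powerset_univ, ← prod_one_add]
  split_ifs with hA
  · simp [hA, card_univ]
  · obtain ⟨i, hi⟩ := nonempty_iff_ne_empty.2 hA
    exact prod_eq_zero (mem_univ i) (by simp [hi])

theorem union_inter_eq_and_union_sdiff_eq {U C Z : Finset α} (hU : U ⊆ Z) (hC : Disjoint C Z) :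
    (U ∪ C) ∩ Z = U ∧ (U ∪ C) \ Z = C := by
  rw [union_inter_distrib_right, union_sdiff_distrib, inter_eq_left.2 hU,
    disjoint_iff_inter_eq_empty.1 hC, sdiff_eq_empty_iff_subset.2 hU, sdiff_eq_self_of_disjoint hC]
  simp

theorem card_filter_card_inter_card_sdiff [Fintype α] (Z : Finset α) (a b : ℕ) :
    #{A : Finset α | #(A ∩ Z) = a ∧ #(A \ Z) = b} = (#Z).choose a * (#Zᶜ).choose b := by
  rw [← card_powersetCard a Z, ← card_powersetCard b Zᶜ, ← card_product]
  have hsplit : ∀ p ∈ powersetCard a Z ×ˢ powersetCard b Zᶜ,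
      (p.1 ∪ p.2) ∩ Z = p.1 ∧ (p.1 ∪ p.2) \ Z = p.2 := by
    intro p hp
    simp only [mem_product, mem_powersetCard, subset_compl_iff_disjoint_right] at hp
    exact union_inter_eq_and_union_sdiff_eq hp.1.1 hp.2.1
  refine card_nbij' (fun A => (A ∩ Z, A \ Z)) (fun p => p.1 ∪ p.2) ?_ ?_ ?_ ?_
  · intro A hA
    simp_all [mem_powersetCard, subset_iff]
  · intro p hp
    obtain ⟨hU, hC⟩ := hsplit p hp
    simp only [coe_product, Set.mem_prod, mem_coe, mem_powersetCard] at hp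
    simp [hU, hC, hp.1.2, hp.2.2]
  · intro A _
    exact sup_inf_sdiff A Z
  · intro p hp
    obtain ⟨hU, hC⟩ := hsplit p hp
    exact Prod.ext hU hC

theorem card_symmDiff_add_two_mul_card_inter (A B : Finset α) :
    #(symmDiff A B) + 2 * #(A ∩ B) = #A + #B := by
  rw [symmDiff_def, sup_eq_union, card_union_of_disjoint disjoint_sdiff_sdiff]
  have := card_inter_add_card_sdiff A B
  have := card_inter_add_card_sdiff B A
  rw [inter_comm B A] at *
  omega

theorem kraw_card_eq_sum_walsh [Fintype α] (k : ℕ) (Z : Finset α) :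
    kraw (Fintype.card α) k #Z = ∑ A ∈ powersetCard k univ, walsh A Z := by
  have hmaps : ∀ A ∈ powersetCard k (univ : Finset α), #(A ∩ Z) ∈ range (k + 1) := by
    intro A hA
    rw [mem_range, Nat.lt_succ_iff, ← (mem_powersetCard.1 hA).2]
    exact card_le_card inter_subset_left
  rw [← sum_fiberwise_of_maps_to hmaps, kraw]
  refine sum_congr rfl fun j hj => ?_
  have hfiber : (powersetCard k univ).filter (fun A => #(A ∩ Z) = j)
      = univ.filter (fun A : Finset α => #(A ∩ Z) = j ∧ #(A \ Z) = k - j) := by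
    ext A
    have := card_inter_add_card_sdiff A Z
    simp only [mem_filter, mem_powersetCard_univ, mem_univ, true_and, mem_range] at hj ⊢
    omega
  rw [sum_congr rfl fun A hA => by rw [walsh, (mem_filter.1 hA).2], sum_const, hfiber,
    card_filter_card_inter_card_sdiff, card_compl]
  ring

theorem card_powersetCard_filter_card_symmDiff_eq [Fintype α] (θ : ℕ) (Y : Finset α) :
    #{A ∈ powersetCard θ univ | #(symmDiff A Y) = θ}
      = if 2 ∣ #Y ∧ #Y / 2 ≤ θ then
          (Fintype.card α - #Y).choose (θ - #Y / 2) * (#Y).choose (#Y / 2) else 0 := by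
  have counts : ∀ A : Finset α, #(A ∩ Y) + #(A \ Y) = #A ∧
      #(symmDiff A Y) + 2 * #(A ∩ Y) = #A + #Y ∧ #(A ∩ Y) ≤ #Y := fun A =>
    ⟨card_inter_add_card_sdiff A Y, card_symmDiff_add_two_mul_card_inter A Y,
      card_le_card inter_subset_right⟩
  split_ifs with hY
  · have hfilter : (powersetCard θ univ).filter (fun A => #(symmDiff A Y) = θ)
        = univ.filter (fun A : Finset α => #(A ∩ Y) = #Y / 2 ∧ #(A \ Y) = θ - #Y / 2) := by
      ext A
      simp only [mem_filter, mem_powersetCard_univ, mem_univ, true_and]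
      have := counts A
      omega
    rw [hfilter, card_filter_card_inter_card_sdiff, card_compl, mul_comm]
  · rw [card_eq_zero, filter_eq_empty_iff]
    intro A hA
    rw [mem_powersetCard_univ] at hA
    have := counts A
    omega

theorem sum_kraw_sq_mul_kraw_card [Fintype α] (θ : ℕ) (Y : Finset α) :
    ∑ i ∈ range (Fintype.card α + 1), kraw (Fintype.card α) θ i ^ 2 * kraw (Fintype.card α) i #Y
      = 2 ^ Fintype.card α * #{A ∈ powersetCard θ univ | #(symmDiff A Y) = θ} := by
  set N := Fintype.card α
  set P : Finset (Finset α) := powersetCard θ univ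
  calc ∑ i ∈ range (N + 1), kraw N θ i ^ 2 * kraw N i #Y
      = ∑ x : Finset α, kraw N θ #x ^ 2 * walsh x Y := by
        rw [← powerset_univ, sum_powerset, card_univ]
        refine sum_congr rfl fun i _ => ?_
        rw [kraw_card_eq_sum_walsh, mul_sum]
        exact sum_congr rfl fun x hx => by rw [(mem_powersetCard.1 hx).2]
    _ = ∑ x : Finset α, ∑ A ∈ P, ∑ B ∈ P, walsh (symmDiff (symmDiff A B) Y) x := by
        refine sum_congr rfl fun x _ => ?_
        rw [kraw_card_eq_sum_walsh, sq, sum_mul_sum, sum_mul]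
        refine sum_congr rfl fun A _ => ?_
        rw [sum_mul]
        refine sum_congr rfl fun B _ => ?_
        rw [walsh_symmDiff, walsh_symmDiff, walsh_comm x Y]
    _ = ∑ A ∈ P, ∑ B ∈ P, if symmDiff (symmDiff A B) Y = ∅ then 2 ^ N else 0 := by
        rw [sum_comm]
        refine sum_congr rfl fun A _ => ?_
        rw [sum_comm]
        exact sum_congr rfl fun B _ => sum_walsh _
    _ = ∑ A ∈ P, if #(symmDiff A Y) = θ then 2 ^ N else 0 := by
        refine sum_congr rfl fun A _ => ?_
        simp_rw [← bot_eq_empty, symmDiff_right_comm A, symmDiff_eq_bot]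
        exact (sum_ite_eq P _ _).trans (if_congr mem_powersetCard_univ rfl rfl)
    _ = 2 ^ N * #{A ∈ P | #(symmDiff A Y) = θ} := by
        rw [← sum_filter, sum_const, nsmul_eq_mul, mul_comm]

end Krawtchouk

theorem kraw_square_sum_general (n θ y : ℕ) (hy : y ≤ n) :
    ∑ i ∈ Finset.range (n + 1), (kraw n θ i) ^ 2 * kraw n i y
      = 2 ^ n *
          (if 2 ∣ y ∧ y / 2 ≤ θ then
            (Nat.choose (n - y) (θ - y / 2) : ℤ) * (Nat.choose y (y / 2) : ℤ)
          else 0) := by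
  obtain ⟨Y, -, rfl⟩ : ∃ Y ⊆ (univ : Finset (Fin n)), #Y = y :=
    exists_subset_card_eq (by simpa using hy)
  have hsum := Krawtchouk.sum_kraw_sq_mul_kraw_card θ Y
  rw [Krawtchouk.card_powersetCard_filter_card_symmDiff_eq, Fintype.card_fin] at hsum
  exact_mod_cast hsum

/-- With `α_i = (P_θ(i))²`, one has
`∑_{i=0}^n α_i P_i(y) = 2^n C(n-y, θ - y/2) C(y, y/2)`, where binomial
coefficients with fractional or negative lower index vanish (so the right-hand
side is `0` for odd `y`, and also when `y/2 > θ`). -/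
theorem kraw_square_sum (n θ y : ℕ) (hθ : 2 * θ ≤ n) (hy : y ≤ n) :
    ∑ i ∈ Finset.range (n + 1), (kraw n θ i) ^ 2 * kraw n i y
      = 2 ^ n *
          (if 2 ∣ y ∧ y / 2 ≤ θ then
            (Nat.choose (n - y) (θ - y / 2) : ℤ) * (Nat.choose y (y / 2) : ℤ)
          else 0) :=
  kraw_square_sum_general n θ y hy
end
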